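/- Let α, β > 0, let M > max(α, β), let 0 < ε. Let d, a be real, d⁺ = d + α, a⁻ = a − β. Suppose λ ∈ {0, 1} and σ is a real number satisfying: a⁻ − d⁺ + ε ≤ M(1−λ), d − a + ε ≤ M(1−λ), σ ≥ 0, σ ≤ αλ, σ ≤ βλ, σ ≤ d⁺ − a⁻ + M(1−λ), σ ≤ a − d + M(1−λ). Then σ ≤ max(0, min(d⁺, a) − max(d, a⁻)), i.e., every feasible σ is at most the true overlapping time. -/
import Mathlib

theorem bigM_sound (α β M ε d a l σ : ℝ)
    (hα : 0 < α) (hβ : 0 < β) (hM : M > max α β) (hε : 0 < ε)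
    (hl : l = 0 ∨ l = 1)
    (h1 : (a - β) - (d + α) + ε ≤ M * (1 - l))
    (h2 : d - a + ε ≤ M * (1 - l))
    (h3 : σ ≥ 0)
    (h4 : σ ≤ α * l)
    (h5 : σ ≤ β * l)
    (h6 : σ ≤ (d + α) - (a - β) + M * (1 - l))
    (h7 : σ ≤ a - d + M * (1 - l)) :
    σ ≤ max 0 (min (d + α) a - max d (a - β)) := by
  rcases hl with h | h
  · subst h; simpa using le_max_of_le_left (by linarith)
  · subst h
    apply le_max_of_le_right
    rcases min_cases (d + α) a with ⟨hm, _⟩ | ⟨hm, _⟩ <;>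
      rcases max_cases d (a - β) with ⟨hx, _⟩ | ⟨hx, _⟩ <;>
      rw [hm, hx] <;> linarith
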